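/- arXiv:2309.07053 — 2 statements merged into one kernel-verified Lean document; each statement's English description precedes it below -/
import Mathlib

section
/- For a fixed channel c : X → D(Y) and multiset ψ of size K ≥ 1 on Y, a distribution ω on X maximizes the Jeffrey likelihood Multinomial[K](c≫ω)(ψ) over all distributions on X if and only if it minimizes the KL divergence D_KL(flrn(ψ), c≫ω). -/
open Finset

noncomputable def validity {X : Type*} [Fintype X] (ω p : X → ℝ) : ℝ := ∑ x, ω x * p x
noncomputable def updateD {X : Type*} [Fintype X] (ω p : X → ℝ) : X → ℝ :=
  fun x => ω x * p x / validity ω p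
noncomputable def push {X Y : Type*} [Fintype X] (c : X → Y → ℝ) (ω : X → ℝ) : Y → ℝ :=
  fun y => ∑ x, ω x * c x y
noncomputable def pull {X Y : Type*} [Fintype Y] (c : X → Y → ℝ) (q : Y → ℝ) : X → ℝ :=
  fun x => ∑ y, c x y * q y
noncomputable def dagger {X Y : Type*} [Fintype X] (c : X → Y → ℝ) (ω : X → ℝ) : Y → X → ℝ :=
  fun y x => ω x * c x y / push c ω y

def IsDist {X : Type*} [Fintype X] (ω : X → ℝ) : Prop :=
  (∀ x, 0 ≤ ω x) ∧ ∑ x, ω x = 1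
def IsChannel {X Y : Type*} [Fintype Y] (c : X → Y → ℝ) : Prop :=
  ∀ x, IsDist (c x)
def IsPred {X : Type*} (p : X → ℝ) : Prop := ∀ x, 0 ≤ p x ∧ p x ≤ 1

noncomputable def coefm {X : Type*} [Fintype X] [DecidableEq X] (K : ℕ) (φ : Sym X K) : ℝ :=
  (K.factorial : ℝ) / ∏ x, (((φ : Multiset X).count x).factorial : ℝ)
noncomputable def multinom {X : Type*} [Fintype X] [DecidableEq X] (K : ℕ) (ω : X → ℝ)
    (φ : Sym X K) : ℝ :=
  coefm K φ * ∏ x, ω x ^ ((φ : Multiset X).count x)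
noncomputable def flrn {X : Type*} [DecidableEq X] (K : ℕ) (φ : Sym X K) : X → ℝ :=
  fun x => ((φ : Multiset X).count x : ℝ) / K
def acc {X : Type*} {K : ℕ} (v : Fin K → X) : Sym X K :=
  ⟨Multiset.map v Finset.univ.val, by simp⟩
noncomputable def arr {X : Type*} [Fintype X] [DecidableEq X] {K : ℕ} (φ : Sym X K) :
    (Fin K → X) → ℝ :=
  fun v => if acc v = φ then 1 / coefm K φ else 0
noncomputable def Mchan {X Y : Type*} [Fintype X] [DecidableEq X] [Fintype Y] [DecidableEq Y]
    {K : ℕ} (c : X → Y → ℝ) : Sym X K → Sym Y K → ℝ :=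
  fun φ ψ => ∑ v : Fin K → X, arr φ v *
    ∑ w : Fin K → Y, (∏ i, c (v i) (w i)) * (if acc w = ψ then 1 else 0)
open Classical in
noncomputable def klE {Z : Type*} [Fintype Z] (ω ρ : Z → ℝ) : EReal :=
  if ∀ z, ω z ≠ 0 → ρ z ≠ 0 then ((∑ z, ω z * Real.log (ω z / ρ z) : ℝ) : EReal) else ⊤

/-!
Both sides only depend on `σ = c ≫ ω` through the likelihood `L(σ) = ∏ y, σ y ^ ψ(y)`:
the multinomial is `L(σ)` times a positive coefficient, and
`D_KL(flrn ψ, σ) = ∑ y, flrn ψ y * log (flrn ψ y) - log L(σ) / K`, which is `+∞` exactly when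
`L(σ) = 0`. So the divergence is a strictly decreasing function of the likelihood.
-/

open Finset

lemma prod_pow_pos_iff {Y : Type*} [Fintype Y] {n : Y → ℕ} {ρ : Y → ℝ} (hρ : ∀ y, 0 ≤ ρ y) :
    0 < ∏ y, ρ y ^ n y ↔ ∀ y, n y ≠ 0 → ρ y ≠ 0 := by
  constructor
  · intro hpos y hy hρy
    have : ∏ y, ρ y ^ n y = 0 := prod_eq_zero (mem_univ y) (by simp [hρy, hy])
    linarith
  · intro hsupp
    refine prod_pos fun y _ => ?_
    rcases eq_or_ne (n y) 0 with hy | hy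
    · simp [hy]
    · exact pow_pos ((hρ y).lt_of_ne' (hsupp y hy)) _

lemma ite_pos_coe_sub_log_div_le_iff {a b C k : ℝ} (hk : 0 < k) (ha : 0 ≤ a) (hb : 0 ≤ b) :
    ((if 0 < a then ((C - Real.log a / k : ℝ) : EReal) else ⊤) ≤
        if 0 < b then ((C - Real.log b / k : ℝ) : EReal) else ⊤) ↔ b ≤ a := by
  rcases ha.lt_or_eq with ha | rfl <;> rcases hb.lt_or_eq with hb | rfl
  · rw [if_pos ha, if_pos hb, EReal.coe_le_coe_iff, sub_le_sub_iff_left,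
      div_le_div_iff_of_pos_right hk, Real.log_le_log_iff hb ha]
  · simp [ha.le]
  · rw [if_neg (lt_irrefl 0), if_pos hb, top_le_iff]
    exact iff_of_false (EReal.coe_ne_top _) hb.not_ge
  · simp

lemma coefm_pos {X : Type*} [Fintype X] [DecidableEq X] (K : ℕ) (φ : Sym X K) :
    0 < coefm K φ :=
  div_pos (mod_cast K.factorial_pos) (prod_pos fun _ _ => mod_cast Nat.factorial_pos _)

lemma push_nonneg {X Y : Type*} [Fintype X] {c : X → Y → ℝ} {ω : X → ℝ}
    (hc : ∀ x y, 0 ≤ c x y) (hω : ∀ x, 0 ≤ ω x) (y : Y) : 0 ≤ push c ω y :=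
  sum_nonneg fun x _ => mul_nonneg (hω x) (hc x y)

lemma flrn_ne_zero_iff {Y : Type*} [DecidableEq Y] {K : ℕ} (hK : K ≠ 0) (ψ : Sym Y K) (y : Y) :
    flrn K ψ y ≠ 0 ↔ (ψ : Multiset Y).count y ≠ 0 := by
  simp [flrn, hK]

section

variable {Y : Type*} [Fintype Y] [DecidableEq Y] {K : ℕ}

lemma sum_flrn_mul_log_div (hK : K ≠ 0) (ψ : Sym Y K) {ρ : Y → ℝ}
    (hρ : ∀ y, (ψ : Multiset Y).count y ≠ 0 → ρ y ≠ 0) :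
    ∑ y, flrn K ψ y * Real.log (flrn K ψ y / ρ y) =
      ∑ y, flrn K ψ y * Real.log (flrn K ψ y) -
        Real.log (∏ y, ρ y ^ (ψ : Multiset Y).count y) / K := by
  rw [Real.log_prod fun y _ => by rw [Ne, pow_eq_zero_iff']; exact fun h => hρ y h.2 h.1,
    sum_div, ← sum_sub_distrib]
  refine sum_congr rfl fun y _ => ?_
  rcases eq_or_ne ((ψ : Multiset Y).count y) 0 with hy | hy
  · simp [flrn, hy]
  · rw [Real.log_div ((flrn_ne_zero_iff hK ψ y).2 hy) (hρ y hy), Real.log_pow, flrn]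
    ring

lemma klE_flrn_eq (hK : K ≠ 0) (ψ : Sym Y K) {ρ : Y → ℝ} (hρ : ∀ y, 0 ≤ ρ y) :
    klE (flrn K ψ) ρ =
      if 0 < ∏ y, ρ y ^ (ψ : Multiset Y).count y then
        ((∑ y, flrn K ψ y * Real.log (flrn K ψ y) -
          Real.log (∏ y, ρ y ^ (ψ : Multiset Y).count y) / K : ℝ) : EReal)
      else ⊤ := by
  simp_rw [klE, prod_pow_pos_iff hρ, flrn_ne_zero_iff hK]
  split_ifs with hsupp
  · rw [sum_flrn_mul_log_div hK ψ hsupp]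
  · rfl

lemma multinom_le_multinom_iff_klE_flrn_le (hK : K ≠ 0) (ψ : Sym Y K) {σ τ : Y → ℝ}
    (hσ : ∀ y, 0 ≤ σ y) (hτ : ∀ y, 0 ≤ τ y) :
    multinom K τ ψ ≤ multinom K σ ψ ↔ klE (flrn K ψ) σ ≤ klE (flrn K ψ) τ := by
  rw [multinom, multinom, mul_le_mul_iff_right₀ (coefm_pos K ψ), klE_flrn_eq hK ψ hσ,
    klE_flrn_eq hK ψ hτ, ite_pos_coe_sub_log_div_le_iff (by positivity)
      (prod_nonneg fun y _ => pow_nonneg (hσ y) _) (prod_nonneg fun y _ => pow_nonneg (hτ y) _)]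

end

theorem stmt9 {X Y : Type*} [Fintype X] [Fintype Y] [DecidableEq Y] (K : ℕ) (hK : 1 ≤ K)
    (c : X → Y → ℝ) (hc : IsChannel c) (ψ : Sym Y K)
    (ω : X → ℝ) (hω : IsDist ω) :
    (∀ ω' : X → ℝ, IsDist ω' → multinom K (push c ω') ψ ≤ multinom K (push c ω) ψ)
    ↔ (∀ ω' : X → ℝ, IsDist ω' → klE (flrn K ψ) (push c ω) ≤ klE (flrn K ψ) (push c ω')) := by
  have hc₀ : ∀ x y, 0 ≤ c x y := fun x => (hc x).1
  refine forall₂_congr fun ω' hω' => ?_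
  exact multinom_le_multinom_iff_klE_flrn_le (by omega) ψ
    (push_nonneg hc₀ hω.1) (push_nonneg hc₀ hω'.1)
end

section
/- Frequentist learning is natural with respect to multiset-extended channels: for a channel c : X → D(Y) and K ≥ 1, flrn ∘ M[K](c) = c ∘ flrn as channels M[K](X) → D(Y), i.e. for every multiset φ of size K, Σ_{ψ} M[K](c)(φ)(ψ)·ψ(y)/K = Σ_x (φ(x)/K)·c(x)(y). -/
/-!
The arrangements of `φ` form one orbit of `Perm (Fin K)` acting on draws, and the stabilizer of
an arrangement consists of the permutations preserving each of its fibres, so it has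
`∏ x, φ(x)!` elements. By orbit–stabilizer there are `K! / ∏ x, φ(x)!` arrangements, hence
`arr φ` is the uniform distribution on them. For a fixed arrangement `v`, the expected number
of `y`s in a draw from `⊗ᵢ c (v i)` is `∑ᵢ c (v i) y` (each coordinate is marginalised
separately), and regrouping this sum by the value of `v i` gives `∑ₓ φ(x) c x y`, independently
of `v`.
-/

open Finset

open Equiv

section Arrangements

variable {ι X : Type*} [Fintype ι]

lemma map_univ_comp_perm (v : ι → X) (σ : Perm ι) :
    univ.val.map (v ∘ σ) = univ.val.map v := by
  rw [← Multiset.map_map, Multiset.map_univ_val_equiv]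

variable [DecidableEq X]

lemma count_map_univ (v : ι → X) (x : X) :
    (univ.val.map v).count x = Fintype.card {i // v i = x} := by
  rw [Multiset.count_map, Fintype.card_subtype]
  simp only [eq_comm]
  rfl

lemma sum_count_map_univ_mul [Fintype X] (v : ι → X) (f : X → ℝ) :
    ∑ x, ((univ.val.map v).count x : ℝ) * f x = ∑ i, f (v i) := by
  simp [← Fintype.sum_fiberwise' v f, count_map_univ]

lemma exists_perm_comp_eq_of_map_univ_eq {v w : ι → X}
    (h : univ.val.map v = univ.val.map w) : ∃ σ : Perm ι, v ∘ σ = w := by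
  have e : ∀ x, {i // w i = x} ≃ {i // v i = x} := fun x =>
    Fintype.equivOfCardEq (by rw [← count_map_univ, ← count_map_univ, h])
  exact ⟨ofFiberEquiv e, funext (ofFiberEquiv_map e)⟩

lemma orbit_domMulAct_perm (v : ι → X) :
    MulAction.orbit (Perm ι)ᵈᵐᵃ v = {w | univ.val.map w = univ.val.map v} := by
  ext w
  constructor
  · rintro ⟨σ, rfl⟩
    exact map_univ_comp_perm v (DomMulAct.mk.symm σ)
  · intro h
    obtain ⟨σ, rfl⟩ := exists_perm_comp_eq_of_map_univ_eq h.symm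
    exact ⟨DomMulAct.mk σ, rfl⟩

lemma card_map_univ_fiber_mul_prod_factorial [Fintype X] [DecidableEq ι] (v : ι → X) :
    Nat.card {w : ι → X // univ.val.map w = univ.val.map v} *
      ∏ x, (Fintype.card {i // v i = x}).factorial = (Fintype.card ι).factorial := by
  have hstab : Nat.card (MulAction.stabilizer (Perm ι)ᵈᵐᵃ v) =
      ∏ x, (Fintype.card {i // v i = x}).factorial := by
    rw [← DomMulAct.stabilizer_card, ← Nat.card_eq_fintype_card]
    exact Nat.card_congr (subtypeEquiv DomMulAct.mk fun _ ↦ Iff.rfl).symm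
  have hgroup : Nat.card (Perm ι)ᵈᵐᵃ = (Fintype.card ι).factorial := by
    rw [Nat.card_congr DomMulAct.mk.symm, Nat.card_eq_fintype_card, Fintype.card_perm]
  rw [← hstab, ← hgroup, ← (MulAction.stabilizer (Perm ι)ᵈᵐᵃ v).card_mul_index,
    MulAction.index_stabilizer, mul_comm, orbit_domMulAct_perm, ← Nat.card_coe_set_eq]
  rfl

end Arrangements

section Accumulation

variable {X : Type*} {K : ℕ}

@[simp]
lemma coe_acc (v : Fin K → X) : (acc v : Multiset X) = univ.val.map v := rfl

lemma acc_surjective : Function.Surjective (acc : (Fin K → X) → Sym X K) := by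
  rintro ⟨m, hm⟩
  obtain ⟨l, rfl⟩ := Quot.exists_rep m
  subst hm
  exact ⟨l.get, Sym.ext (by simp [Fin.univ_val_map])⟩

variable [Fintype X] [DecidableEq X]

lemma card_acc_fiber_mul_prod_factorial (φ : Sym X K) :
    Nat.card {v : Fin K → X // acc v = φ} * ∏ x, ((φ : Multiset X).count x).factorial =
      K.factorial := by
  obtain ⟨v, rfl⟩ := acc_surjective φ
  simpa only [← Sym.coe_inj, coe_acc, count_map_univ, Fintype.card_fin]
    using card_map_univ_fiber_mul_prod_factorial v

lemma sum_arr (φ : Sym X K) : ∑ v, arr φ v = 1 := by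
  have hcard := card_acc_fiber_mul_prod_factorial φ
  have hprod : (0 : ℝ) < ∏ x, (((φ : Multiset X).count x).factorial : ℝ) := by positivity
  rw [Nat.card_eq_fintype_card, Fintype.card_subtype] at hcard
  simp only [arr, coefm]
  rw [sum_ite, sum_const_zero, add_zero, sum_const, nsmul_eq_mul]
  field_simp
  exact_mod_cast hcard

lemma sum_arr_mul_of_forall_acc_eq (φ : Sym X K) {F : (Fin K → X) → ℝ} {a : ℝ}
    (hF : ∀ v, acc v = φ → F v = a) : ∑ v, arr φ v * F v = a := by
  calc ∑ v, arr φ v * F v = ∑ v, arr φ v * a := by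
        refine sum_congr rfl fun v _ => ?_
        by_cases hv : acc v = φ
        · rw [hF v hv]
        · simp [arr, hv]
    _ = a := by rw [← sum_mul, sum_arr, one_mul]

end Accumulation

section ProductChannel

variable {ι Y : Type*} [Fintype ι] [DecidableEq ι] [Fintype Y]

lemma sum_prod_mul_apply {g : ι → Y → ℝ} (hg : ∀ j, ∑ z, g j z = 1) (f : Y → ℝ) (i : ι) :
    ∑ w : ι → Y, (∏ j, g j (w j)) * f (w i) = ∑ z, g i z * f z := by
  have hmul : ∀ w : ι → Y,
      (∏ j, g j (w j)) * f (w i) = ∏ j, g j (w j) * if j = i then f (w j) else 1 := by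
    intro w
    rw [prod_mul_distrib, prod_ite_eq' univ i, if_pos (mem_univ i)]
  rw [sum_congr rfl fun w _ => hmul w,
    ← Fintype.prod_sum fun j z => g j z * if j = i then f z else 1,
    prod_eq_single i (fun j _ hj => by simp [hj, hg j]) (by simp)]
  simp

lemma sum_prod_mul_count_map_univ [DecidableEq Y] {g : ι → Y → ℝ} (hg : ∀ j, ∑ z, g j z = 1)
    (y : Y) : ∑ w : ι → Y, (∏ j, g j (w j)) * ((univ.val.map w).count y : ℝ) = ∑ i, g i y := by
  simp_rw [count_map_univ, Fintype.card_subtype, natCast_card_filter, mul_sum]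
  rw [sum_comm]
  refine sum_congr rfl fun i _ => ?_
  rw [sum_prod_mul_apply hg (fun z => if z = y then (1 : ℝ) else 0) i]
  simp

end ProductChannel

lemma sum_Mchan_mul {X Y : Type*} [Fintype X] [DecidableEq X] [Fintype Y] [DecidableEq Y] {K : ℕ}
    (c : X → Y → ℝ) (φ : Sym X K) (F : Sym Y K → ℝ) :
    ∑ ψ, Mchan c φ ψ * F ψ = ∑ v, arr φ v * ∑ w, (∏ i, c (v i) (w i)) * F (acc w) := by
  simp only [Mchan, sum_mul, mul_sum, mul_assoc, ite_mul, one_mul, zero_mul]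
  rw [sum_comm]
  refine sum_congr rfl fun v _ => ?_
  rw [sum_comm]
  simp

theorem stmt16_general {X Y : Type*} [Fintype X] [DecidableEq X] [Fintype Y] [DecidableEq Y]
    (K : ℕ) (c : X → Y → ℝ) (hc : IsChannel c) :
    ∀ (φ : Sym X K) (y : Y),
      ∑ ψ : Sym Y K, Mchan c φ ψ * (((ψ : Multiset Y).count y : ℝ) / K)
        = ∑ x, (((φ : Multiset X).count x : ℝ) / K) * c x y := by
  intro φ y
  rw [sum_Mchan_mul]
  refine sum_arr_mul_of_forall_acc_eq φ fun v hv => ?_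
  simp_rw [coe_acc, mul_div_assoc', ← sum_div,
    sum_prod_mul_count_map_univ (fun i => (hc (v i)).2), ← hv, coe_acc,
    div_mul_eq_mul_div, ← sum_div, sum_count_map_univ_mul v (c · y)]

theorem stmt16 {X Y : Type*} [Fintype X] [DecidableEq X] [Fintype Y] [DecidableEq Y]
    (K : ℕ) (hK : 1 ≤ K) (c : X → Y → ℝ) (hc : IsChannel c) :
    ∀ (φ : Sym X K) (y : Y),
      ∑ ψ : Sym Y K, Mchan c φ ψ * (((ψ : Multiset Y).count y : ℝ) / K)
        = ∑ x, (((φ : Multiset X).count x : ℝ) / K) * c x y :=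
  stmt16_general K c hc
end
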